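/- A commutative ring R is local (has a unique maximal ideal) if and only if Prim(R) is supercompact, i.e., every open covering of Prim(R) contains Prim(R) itself as a member. -/

import Mathlib

/-!
A space is supercompact exactly when it has a point lying in the closure of every point: such a
point forces every open set containing it to be everything, and conversely, if there is no such
point, the open sets different from the whole space already cover it. In `Prim(R)` the point `Q`
lies in the closure of `Q'` iff `√Q' ≤ √Q`, and a primary ideal whose radical contains all
radicals of primary ideals exists iff `R` has a unique maximal ideal, the radical then being that
maximal ideal.
-/

def PrimarySpectrum (R : Type*) [CommRing R] := {Q : Ideal R // Q.IsPrimary}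

def primVRad {R : Type*} [CommRing R] (I : Ideal R) : Set (PrimarySpectrum R) :=
  {Q | I ≤ Q.1.radical}

instance (R : Type*) [CommRing R] : TopologicalSpace (PrimarySpectrum R) :=
  TopologicalSpace.generateFrom {U | ∃ I : Ideal R, U = (primVRad I)ᶜ}

open Set Topology TopologicalSpace

def IsSupercompact (X : Type*) [TopologicalSpace X] : Prop :=
  ∀ 𝒰 : Set (Set X), (∀ U ∈ 𝒰, IsOpen U) → ⋃₀ 𝒰 = univ → univ ∈ 𝒰

theorem isSupercompact_iff_exists_forall_specializes {X : Type*} [TopologicalSpace X] :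
    IsSupercompact X ↔ ∃ x : X, ∀ y, y ⤳ x := by
  constructor
  · intro h
    by_contra! hno
    have hcover : ⋃₀ {U : Set X | IsOpen U ∧ U ≠ univ} = univ := by
      refine eq_univ_of_forall fun x => ?_
      obtain ⟨y, hyx⟩ := hno x
      obtain ⟨U, hU, hxU, hyU⟩ : ∃ U, IsOpen U ∧ x ∈ U ∧ y ∉ U := by
        simpa [specializes_iff_forall_open] using hyx
      exact ⟨U, ⟨hU, ne_univ_iff_exists_notMem U |>.mpr ⟨y, hyU⟩⟩, hxU⟩
    exact (h _ (fun U hU => hU.1) hcover).2 rfl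
  · rintro ⟨x, hx⟩ 𝒰 hopen hcover
    obtain ⟨U, hU𝒰, hxU⟩ := mem_sUnion.mp (hcover.symm ▸ mem_univ x)
    have hU : U = univ := eq_univ_of_forall fun y => (hx y).mem_open (hopen U hU𝒰) hxU
    exact hU ▸ hU𝒰

theorem specializes_generateFrom_iff {α : Type*} {g : Set (Set α)} {x y : α} :
    @Specializes α (generateFrom g) x y ↔ ∀ s ∈ g, y ∈ s → x ∈ s := by
  let _ := generateFrom g
  refine ⟨fun h s hs hys => h.mem_open (isOpen_generateFrom_of_mem hs) hys, fun h => ?_⟩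
  rw [Specializes, nhds_generateFrom (a := y)]
  refine le_iInf₂ fun s ⟨hys, hs⟩ => ?_
  exact Filter.le_principal_iff.mpr ((isOpen_generateFrom_of_mem hs).mem_nhds (h s hs hys))

namespace PrimarySpectrum

variable {R : Type*} [CommRing R]

theorem radical_ne_top (Q : PrimarySpectrum R) : Q.1.radical ≠ ⊤ :=
  Ideal.radical_eq_top.not.mpr Q.2.1

theorem specializes_iff_radical_le {x y : PrimarySpectrum R} :
    x ⤳ y ↔ x.1.radical ≤ y.1.radical := by
  rw [specializes_generateFrom_iff]
  simp only [mem_ofPred_eq, forall_exists_index, forall_eq_apply_imp_iff, primVRad, mem_compl_iff,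
    not_imp_not]
  exact ⟨fun h => h _ le_rfl, fun h _ hI => hI.trans h⟩

end PrimarySpectrum

theorem existsUnique_isMaximal_iff_exists_forall_radical_le {R : Type*} [CommRing R] :
    (∃! M : Ideal R, M.IsMaximal) ↔
      ∃ Q : PrimarySpectrum R, ∀ Q' : PrimarySpectrum R, Q'.1.radical ≤ Q.1.radical := by
  constructor
  · rintro ⟨M, hM, hunique⟩
    refine ⟨⟨M, hM.isPrime.isPrimary⟩, fun Q' => ?_⟩
    obtain ⟨N, hN, hle⟩ := Ideal.exists_le_maximal _ Q'.radical_ne_top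
    rw [show M.radical = M from hM.isPrime.radical, ← hunique N hN]
    exact hle
  · rintro ⟨Q, hQ⟩
    have eq_radical : ∀ M : Ideal R, M.IsMaximal → M = Q.1.radical := fun M hM =>
      hM.eq_of_le Q.radical_ne_top
        (hM.isPrime.radical ▸ hQ ⟨M, hM.isPrime.isPrimary⟩)
    obtain ⟨N, hN, -⟩ := Ideal.exists_le_maximal _ Q.radical_ne_top
    exact ⟨Q.1.radical, eq_radical N hN ▸ hN, eq_radical⟩

theorem stmt_19_general (R : Type*) [CommRing R] :
    (∃! M : Ideal R, M.IsMaximal) ↔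
      ∀ 𝒰 : Set (Set (PrimarySpectrum R)), (∀ U ∈ 𝒰, IsOpen U) →
        ⋃₀ 𝒰 = Set.univ → Set.univ ∈ 𝒰 := by
  change _ ↔ IsSupercompact (PrimarySpectrum R)
  simp only [existsUnique_isMaximal_iff_exists_forall_radical_le,
    isSupercompact_iff_exists_forall_specializes, PrimarySpectrum.specializes_iff_radical_le]

theorem stmt_19 (R : Type*) [CommRing R] [Nontrivial R] :
    (∃! M : Ideal R, M.IsMaximal) ↔
      ∀ 𝒰 : Set (Set (PrimarySpectrum R)), (∀ U ∈ 𝒰, IsOpen U) →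
        ⋃₀ 𝒰 = Set.univ → Set.univ ∈ 𝒰 :=
  stmt_19_general R
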